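/- Fix an integer s ≥ 2 and p ∈ (0,1). Let X_1, X_2, … be an i.i.d. sequence of random variables with the Fréchet(α,0,1) distribution, α > 0, and for each i ∈ ℕ let Q_{i,s}^{Fr*} = −log(X_{(is, i(s+1)−1)}/X_{(i, i(s+1)−1)})/log(1 − log(s)/log(s+1)) be computed from the first n = i(s+1)−1 observations, and set (F̂_{i,s,Fr}^←)^*(p) = (−log p)^{−Q_{i,s}^{Fr*}}. Then (F̂_{i,s,Fr}^←)^*(p) converges almost surely, as i → ∞, to the theoretical quantile F_X^←(p) = (−log p)^{−1/α}. -/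

import Mathlib

/-! The order statistics `X_(is, n)` and `X_(i, n)`, `n = i(s+1) - 1`, are sample quantiles at
levels tending to `s/(s+1)` and `1/(s+1)`. The strong law of large numbers, applied to the
indicators of `X_j ≤ t`, makes the empirical CDF converge almost surely at all rational `t` at once,
and this pins those sample quantiles to the Fréchet quantiles `(log (s+1) - log s)^(-1/α)` and
`(log (s+1))^(-1/α)`. Their ratio is `(1 - log s / log (s+1))^(-1/α)`, so `Q*` tends to `1/α`. -/

open MeasureTheory ProbabilityTheory Real Filter

/-- The `k`-th order statistic (1-based indexing) of the sample `x : Fin n → ℝ`. -/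
noncomputable def orderStat (n : ℕ) (x : Fin n → ℝ) (k : ℕ) : ℝ :=
  (Multiset.sort ((List.ofFn x : List ℝ) : Multiset ℝ) (· ≤ ·)).getD (k - 1) 0

/-- The cumulative distribution function of the Fréchet(α, 0, 1) distribution. -/
noncomputable def frechetCDF (α : ℝ) (x : ℝ) : ℝ :=
  if 0 < x then Real.exp (-(x ^ (-α))) else 0

open Topology Finset

theorem List.Pairwise.getElem_le_iff_lt_countP {α : Type*} [LinearOrder α] {l : List α}
    (hl : l.Pairwise (· ≤ ·)) {i : ℕ} (hi : i < l.length) (t : α) :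
    l[i] ≤ t ↔ i < l.countP (· ≤ t) := by
  constructor
  · intro h
    have htake : (l.take (i + 1)).countP (· ≤ t) = i + 1 := by
      rw [List.countP_eq_length.2, List.length_take, min_eq_left hi]
      intro a ha
      obtain ⟨j, hj, rfl⟩ := List.getElem_of_mem ha
      simp only [List.length_take, lt_min_iff] at hj
      simpa [List.getElem_take] using
        (hl.rel_get_of_le (a := ⟨j, hj.2⟩) (b := ⟨i, hi⟩) (Nat.le_of_lt_succ hj.1)).trans h
    have := (l.take_sublist (i + 1)).countP_le (p := (· ≤ t))
    omega
  · intro h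
    by_contra! hlt
    have hdrop : (l.drop i).countP (· ≤ t) = 0 := by
      refine List.countP_eq_zero.2 fun a ha => ?_
      obtain ⟨j, hj, rfl⟩ := List.getElem_of_mem ha
      simp only [List.length_drop] at hj
      simpa [List.getElem_drop] using
        hlt.trans_le
          (hl.rel_get_of_le (a := ⟨i, hi⟩) (b := ⟨i + j, by omega⟩) (Nat.le_add_right i j))
    have hsplit := congrArg (List.countP (· ≤ t)) (l.take_append_drop i)
    rw [List.countP_append, hdrop] at hsplit
    have := (l.take i).countP_le_length (p := (· ≤ t))
    rw [List.length_take] at this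
    omega

theorem orderStat_le_iff {n k : ℕ} (x : ℕ → ℝ) (hk : 1 ≤ k) (hkn : k ≤ n) (t : ℝ) :
    orderStat n (fun j => x j) k ≤ t ↔ k ≤ #{j ∈ range n | x j ≤ t} := by
  set l := Multiset.sort ((List.ofFn fun j : Fin n => x j : List ℝ) : Multiset ℝ) (· ≤ ·)
  have hperm : l.Perm ((List.range n).map x) := by
    rw [← Multiset.coe_eq_coe, Multiset.sort_eq]
    congr 1
    apply List.ext_getElem <;> simp
  have hi : k - 1 < l.length := by rw [hperm.length_eq, List.length_map, List.length_range]; omega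
  have hcount : l.countP (· ≤ t) = #{j ∈ range n | x j ≤ t} := by
    rw [hperm.countP_eq, List.countP_map, Finset.card_def, Finset.filter_val, Finset.range_val,
      Multiset.range, Multiset.filter_coe, Multiset.coe_card, List.countP_eq_length_filter]
    rfl
  rw [orderStat, List.getD_eq_getElem l 0 hi,
    (Multiset.pairwise_sort _ _).getElem_le_iff_lt_countP hi, hcount]
  omega

noncomputable def empiricalCDF (x : ℕ → ℝ) (n : ℕ) (t : ℝ) : ℝ :=
  #{j ∈ range n | x j ≤ t} / n

theorem orderStat_le_iff_le_empiricalCDF {n k : ℕ} (x : ℕ → ℝ) (hk : 1 ≤ k) (hkn : k ≤ n)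
    (t : ℝ) : orderStat n (fun j => x j) k ≤ t ↔ (k : ℝ) / n ≤ empiricalCDF x n t := by
  have hn : (0 : ℝ) < n := by norm_cast; omega
  rw [orderStat_le_iff x hk hkn, empiricalCDF, div_le_div_iff_of_pos_right hn, Nat.cast_le]

theorem eventually_one_le_and_le_of_tendsto_div {k N : ℕ → ℕ} {q : ℝ} (hq : q ∈ Set.Ioo 0 1)
    (h : Tendsto (fun i => (k i : ℝ) / N i) atTop (𝓝 q)) :
    ∀ᶠ i in atTop, 1 ≤ k i ∧ k i ≤ N i := by
  filter_upwards [h.eventually (Ioo_mem_nhds hq.1 hq.2)] with i ⟨hpos, hlt⟩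
  have hN : (0 : ℝ) < N i := by
    rcases div_pos_iff.1 hpos with h | h
    · exact h.2
    · exact absurd h.1 (Nat.cast_nonneg _).not_gt
  have hk : (0 : ℝ) < k i := (div_pos_iff_of_pos_right hN).1 hpos
  rw [div_lt_one hN] at hlt
  exact ⟨by exact_mod_cast hk, by exact_mod_cast hlt.le⟩

theorem tendsto_orderStat_of_tendsto_empiricalCDF {x : ℕ → ℝ} {F : ℝ → ℝ}
    (hF : ∀ t : ℚ, Tendsto (fun n => empiricalCDF x n t) atTop (𝓝 (F t)))
    {N k : ℕ → ℕ} (hN : Tendsto N atTop atTop) {q T : ℝ} (hq : q ∈ Set.Ioo 0 1)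
    (hkN : Tendsto (fun i => (k i : ℝ) / N i) atTop (𝓝 q))
    (hlt : ∀ t < T, F t < q) (hgt : ∀ t, T < t → q < F t) :
    Tendsto (fun i => orderStat (N i) (fun j => x j) (k i)) atTop (𝓝 T) := by
  have hk := eventually_one_le_and_le_of_tendsto_div hq hkN
  rw [tendsto_order]
  refine ⟨fun a ha => ?_, fun b hb => ?_⟩
  · obtain ⟨r, har, hrT⟩ := exists_rat_btwn ha
    filter_upwards [hk, ((hF r).comp hN).eventually_lt hkN (hlt r hrT)] with i hki hi
    refine har.trans (lt_of_not_ge fun hle => ?_)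
    exact ((orderStat_le_iff_le_empiricalCDF x hki.1 hki.2 r).1 hle).not_gt hi
  · obtain ⟨r, hTr, hrb⟩ := exists_rat_btwn hb
    filter_upwards [hk, hkN.eventually_lt ((hF r).comp hN) (hgt r hTr)] with i hki hi
    exact ((orderStat_le_iff_le_empiricalCDF x hki.1 hki.2 r).2 hi.le).trans_lt hrb

theorem tendsto_natCast_mul_div_mul_sub_one (a : ℕ) {b : ℕ} (hb : b ≠ 0) :
    Tendsto (fun i : ℕ => ((i * a : ℕ) : ℝ) / ((i * b - 1 : ℕ) : ℝ)) atTop (𝓝 (a / b)) := by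
  have h := (tendsto_natCast_div_add_atTop (-(1 / b : ℝ))).const_mul ((a : ℝ) / b)
  rw [mul_one] at h
  refine h.congr' ?_
  filter_upwards [eventually_ge_atTop 1] with i hi
  have hib : 1 ≤ i * b := Nat.one_le_iff_ne_zero.2 (mul_ne_zero (by omega) hb)
  rw [Nat.cast_sub hib]
  push_cast
  field_simp
  ring

section StrongLaw

variable {Ω : Type*} [MeasurableSpace Ω] {μ : Measure Ω}

theorem identDistrib_of_measure_le_eq [IsFiniteMeasure μ] {X Y : Ω → ℝ} (hX : Measurable X)
    (hY : Measurable Y) (h : ∀ x, μ {ω | X ω ≤ x} = μ {ω | Y ω ≤ x}) :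
    IdentDistrib X Y μ μ where
  aemeasurable_fst := hX.aemeasurable
  aemeasurable_snd := hY.aemeasurable
  map_eq := Measure.ext_of_Iic _ _ fun x => by
    rw [Measure.map_apply hX measurableSet_Iic, Measure.map_apply hY measurableSet_Iic]
    exact h x

theorem ae_tendsto_empiricalCDF [IsFiniteMeasure μ] {X : ℕ → Ω → ℝ}
    (hmeas : ∀ k, Measurable (X k)) (hindep : iIndepFun X μ)
    (hident : ∀ k, IdentDistrib (X k) (X 0) μ μ) (t : ℝ) :
    ∀ᵐ ω ∂μ, Tendsto (fun n => empiricalCDF (X · ω) n t) atTop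
      (𝓝 (μ.real {ω | X 0 ω ≤ t})) := by
  set g : ℝ → ℝ := (Set.Iic t).indicator 1
  have hg : Measurable g := measurable_one.indicator measurableSet_Iic
  have hg0 : g ∘ X 0 = (X 0 ⁻¹' Set.Iic t).indicator 1 :=
    funext fun _ => (Set.indicator_comp_right (X 0)).symm
  have hmeas0 : MeasurableSet (X 0 ⁻¹' Set.Iic t) := hmeas 0 measurableSet_Iic
  have hint : Integrable (g ∘ X 0) μ := hg0 ▸ (integrable_const 1).indicator hmeas0
  have hmean : μ[g ∘ X 0] = μ.real {ω | X 0 ω ≤ t} := by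
    rw [hg0, integral_indicator_one hmeas0]
    rfl
  filter_upwards [strong_law_ae_real (fun k => g ∘ X k) hint
    (fun i j hij => (hindep.comp (fun _ => g) fun _ => hg).indepFun hij)
    (fun k => (hident k).comp hg)] with ω hω
  rw [← hmean]
  refine hω.congr fun n => ?_
  rw [empiricalCDF, Finset.natCast_card_filter]
  simp [g, Set.indicator]

theorem ae_forall_rat_tendsto_empiricalCDF [IsFiniteMeasure μ] {X : ℕ → Ω → ℝ} {F : ℝ → ℝ}
    (hF : ∀ x, 0 ≤ F x) (hmeas : ∀ k, Measurable (X k)) (hindep : iIndepFun X μ)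
    (hdist : ∀ k x, μ {ω | X k ω ≤ x} = ENNReal.ofReal (F x)) :
    ∀ᵐ ω ∂μ, ∀ t : ℚ, Tendsto (fun n => empiricalCDF (X · ω) n t) atTop (𝓝 (F t)) := by
  have hident (k : ℕ) : IdentDistrib (X k) (X 0) μ μ :=
    identDistrib_of_measure_le_eq (hmeas k) (hmeas 0) fun x => by rw [hdist, hdist]
  rw [ae_all_iff]
  intro t
  simpa [measureReal_def, hdist, ENNReal.toReal_ofReal (hF _)] using
    ae_tendsto_empiricalCDF hmeas hindep hident t

end StrongLaw

section Frechet

variable {α : ℝ}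

noncomputable def frechetQuantile (α q : ℝ) : ℝ :=
  (-log q) ^ (-(1 / α))

theorem frechetCDF_nonneg (α x : ℝ) : 0 ≤ frechetCDF α x := by
  unfold frechetCDF
  split_ifs
  exacts [(exp_pos _).le, le_rfl]

theorem frechetCDF_strictMonoOn (hα : 0 < α) : StrictMonoOn (frechetCDF α) (Set.Ioi 0) := by
  intro a (ha : 0 < a) b _ hab
  rw [frechetCDF, frechetCDF, if_pos ha, if_pos (ha.trans hab), exp_lt_exp, neg_lt_neg_iff]
  exact rpow_lt_rpow_of_neg ha hab (neg_neg_of_pos hα)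

theorem frechetQuantile_pos {q : ℝ} (hq : q ∈ Set.Ioo 0 1) : 0 < frechetQuantile α q :=
  rpow_pos_of_pos (neg_pos.2 (log_neg hq.1 hq.2)) _

theorem frechetCDF_frechetQuantile (hα : α ≠ 0) {q : ℝ} (hq : q ∈ Set.Ioo 0 1) :
    frechetCDF α (frechetQuantile α q) = q := by
  rw [frechetCDF, if_pos (frechetQuantile_pos hq), frechetQuantile,
    ← rpow_mul (neg_pos.2 (log_neg hq.1 hq.2)).le,
    show -(1 / α) * -α = 1 by field_simp, rpow_one, neg_neg, exp_log hq.1]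

theorem frechetCDF_lt_of_lt_frechetQuantile (hα : 0 < α) {q t : ℝ} (hq : q ∈ Set.Ioo 0 1)
    (ht : t < frechetQuantile α q) : frechetCDF α t < q := by
  rcases le_or_gt t 0 with ht0 | ht0
  · rw [frechetCDF, if_neg ht0.not_gt]
    exact hq.1
  · rw [← frechetCDF_frechetQuantile hα.ne' hq]
    exact frechetCDF_strictMonoOn hα ht0 (frechetQuantile_pos hq) ht

theorem lt_frechetCDF_of_frechetQuantile_lt (hα : 0 < α) {q t : ℝ} (hq : q ∈ Set.Ioo 0 1)
    (ht : frechetQuantile α q < t) : q < frechetCDF α t := by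
  rw [← frechetCDF_frechetQuantile hα.ne' hq]
  exact frechetCDF_strictMonoOn hα (frechetQuantile_pos hq) ((frechetQuantile_pos hq).trans ht) ht

theorem log_frechetQuantile_div_frechetQuantile {s : ℝ} (hs : 1 < s) :
    log (frechetQuantile α (s / (s + 1)) / frechetQuantile α (1 / (s + 1))) /
      log (1 - log s / log (s + 1)) = -(1 / α) := by
  have hlogs : 0 < log s := log_pos hs
  have hlogs1 : log s < log (s + 1) := log_lt_log (by linarith) (by linarith)
  have hL : 0 < log (s + 1) := hlogs.trans hlogs1
  have hB : 1 - log s / log (s + 1) ∈ Set.Ioo 0 1 :=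
    ⟨sub_pos.2 ((div_lt_one hL).2 hlogs1), sub_lt_self _ (div_pos hlogs hL)⟩
  have hratio : frechetQuantile α (s / (s + 1)) / frechetQuantile α (1 / (s + 1)) =
      (1 - log s / log (s + 1)) ^ (-(1 / α)) := by
    have hnum : -log (s / (s + 1)) = log (s + 1) - log s := by
      rw [log_div (by linarith) (by linarith)]
      ring
    have hden : -log (1 / (s + 1)) = log (s + 1) := by rw [one_div, log_inv, neg_neg]
    rw [frechetQuantile, frechetQuantile, hnum, hden, ← div_rpow (by linarith) hL.le]
    congr 1
    field_simp
  rw [hratio, log_rpow hB.1, mul_div_cancel_right₀ _ (log_neg hB.1 hB.2).ne]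

end Frechet

theorem stmt11_general {Ω : Type*} [MeasurableSpace Ω] (μ : Measure Ω) [IsProbabilityMeasure μ]
    (s : ℕ) (hs : 2 ≤ s) (p : ℝ)
    (α : ℝ) (hα : 0 < α)
    (X : ℕ → Ω → ℝ) (hmeas : ∀ k, Measurable (X k))
    (hindep : iIndepFun X μ)
    (hdist : ∀ k x, μ {ω | X k ω ≤ x} = ENNReal.ofReal (frechetCDF α x)) :
    ∀ᵐ ω ∂μ, Tendsto (fun i : ℕ =>
        (-Real.log p) ^ (-(-(Real.log
          (orderStat (i * (s + 1) - 1) (fun j => X j ω) (i * s) /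
            orderStat (i * (s + 1) - 1) (fun j => X j ω) i) /
          Real.log (1 - Real.log s / Real.log (s + 1))))))
      atTop (nhds ((-Real.log p) ^ (-(1 / α)))) := by
  have hsR : (1 : ℝ) < s := by exact_mod_cast hs
  have hN : Tendsto (fun i : ℕ => i * (s + 1) - 1) atTop atTop :=
    (tendsto_sub_atTop_nat 1).comp (tendsto_id.atTop_mul_const' (by omega))
  have hupper : (s : ℝ) / (s + 1) ∈ Set.Ioo 0 1 :=
    ⟨by positivity, (div_lt_one (by positivity)).2 (lt_add_one _)⟩
  have hlower : (1 : ℝ) / (s + 1) ∈ Set.Ioo 0 1 :=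
    ⟨by positivity, (div_lt_one (by positivity)).2 (by linarith)⟩
  filter_upwards [ae_forall_rat_tendsto_empiricalCDF (frechetCDF_nonneg α) hmeas hindep hdist]
    with ω hω
  have hXupper := tendsto_orderStat_of_tendsto_empiricalCDF hω hN hupper
    (by exact_mod_cast tendsto_natCast_mul_div_mul_sub_one s (b := s + 1) (by omega))
    (fun _ => frechetCDF_lt_of_lt_frechetQuantile hα hupper)
    (fun _ => lt_frechetCDF_of_frechetQuantile_lt hα hupper)
  have hXlower := tendsto_orderStat_of_tendsto_empiricalCDF (k := fun i => i) hω hN hlower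
    (by simpa using tendsto_natCast_mul_div_mul_sub_one 1 (b := s + 1) (by omega))
    (fun _ => frechetCDF_lt_of_lt_frechetQuantile hα hlower)
    (fun _ => lt_frechetCDF_of_frechetQuantile_lt hα hlower)
  have hexponent := ((hXupper.div hXlower (frechetQuantile_pos hlower).ne').log
    (div_pos (frechetQuantile_pos hupper) (frechetQuantile_pos hlower)).ne').div_const
    (log (1 - log s / log (s + 1)))
  rw [log_frechetQuantile_div_frechetQuantile hsR] at hexponent
  simp only [neg_neg]
  exact (continuousAt_const_rpow' (by simp [hα.ne'])).tendsto.comp hexponent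

/-- For fixed `s ≥ 2`, `p ∈ (0,1)` and an i.i.d. sequence from the
Fréchet(α,0,1) distribution, the quantile estimators
`(-log p)^{-Q_{i,s}^{Fr*}}`, computed from the first `n = i(s+1)-1`
observations, converge almost surely to the theoretical quantile
`(-log p)^{-1/α}` as `i → ∞`. -/
theorem stmt11 {Ω : Type*} [MeasurableSpace Ω] (μ : Measure Ω) [IsProbabilityMeasure μ]
    (s : ℕ) (hs : 2 ≤ s) (p : ℝ) (hp : p ∈ Set.Ioo (0 : ℝ) 1)
    (α : ℝ) (hα : 0 < α)
    (X : ℕ → Ω → ℝ) (hmeas : ∀ k, Measurable (X k))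
    (hindep : iIndepFun X μ)
    (hdist : ∀ k x, μ {ω | X k ω ≤ x} = ENNReal.ofReal (frechetCDF α x)) :
    ∀ᵐ ω ∂μ, Tendsto (fun i : ℕ =>
        (-Real.log p) ^ (-(-(Real.log
          (orderStat (i * (s + 1) - 1) (fun j => X j ω) (i * s) /
            orderStat (i * (s + 1) - 1) (fun j => X j ω) i) /
          Real.log (1 - Real.log s / Real.log (s + 1))))))
      atTop (nhds ((-Real.log p) ^ (-(1 / α)))) :=
  stmt11_general μ s hs p α hα X hmeas hindep hdist
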